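/- arXiv:math/0612502 — 2 statements merged into one kernel-verified Lean document; each statement's English description precedes it below -/
import Mathlib

section
/- The map (M,(λ,μ,κ))·(Z,W) := (M⟨Z⟩, (W+λZ+μ)(CZ+D)⁻¹) defines a group action of the Jacobi group G^J = Sp(n,ℝ) ⋉ H_ℝ^(n,m) on H_{n,m} = H_n × ℂ^(m×n): the action of a product equals the composition of actions. -/
open Matrix

noncomputable section

/-- The standard symplectic form matrix J = [[0, I],[-I, 0]]. -/
def symplJ (n : ℕ) : Matrix (Fin n ⊕ Fin n) (Fin n ⊕ Fin n) ℝ :=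
  Matrix.fromBlocks 0 1 (-1) 0

/-- `M ∈ Sp(n, ℝ)` iff `Mᵀ J M = J`. -/
def IsSymplectic {n : ℕ} (M : Matrix (Fin n ⊕ Fin n) (Fin n ⊕ Fin n) ℝ) : Prop :=
  Mᵀ * symplJ n * M = symplJ n

/-- Membership in the Siegel upper half space `H_n`: symmetric with positive
definite imaginary part. -/
def InSiegel {n : ℕ} (Z : Matrix (Fin n) (Fin n) ℂ) : Prop :=
  Z.IsSymm ∧ (Z.map Complex.im).PosDef

/-- The block `A` of `M = [[A,B],[C,D]]`, regarded as a complex matrix. -/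
def blkA {n : ℕ} (M : Matrix (Fin n ⊕ Fin n) (Fin n ⊕ Fin n) ℝ) :
    Matrix (Fin n) (Fin n) ℂ := (M.toBlocks₁₁).map Complex.ofReal

def blkB {n : ℕ} (M : Matrix (Fin n ⊕ Fin n) (Fin n ⊕ Fin n) ℝ) :
    Matrix (Fin n) (Fin n) ℂ := (M.toBlocks₁₂).map Complex.ofReal

def blkC {n : ℕ} (M : Matrix (Fin n ⊕ Fin n) (Fin n ⊕ Fin n) ℝ) :
    Matrix (Fin n) (Fin n) ℂ := (M.toBlocks₂₁).map Complex.ofReal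

def blkD {n : ℕ} (M : Matrix (Fin n ⊕ Fin n) (Fin n ⊕ Fin n) ℝ) :
    Matrix (Fin n) (Fin n) ℂ := (M.toBlocks₂₂).map Complex.ofReal

/-- The symplectic action `M⟨Z⟩ = (AZ + B)(CZ + D)⁻¹`. -/
def siegelAct {n : ℕ} (M : Matrix (Fin n ⊕ Fin n) (Fin n ⊕ Fin n) ℝ)
    (Z : Matrix (Fin n) (Fin n) ℂ) : Matrix (Fin n) (Fin n) ℂ :=
  (blkA M * Z + blkB M) * (blkC M * Z + blkD M)⁻¹

/-- Elements of the Heisenberg group: triples `(λ, μ, κ)`. -/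
abbrev Heis (m n : ℕ) :=
  Matrix (Fin m) (Fin n) ℝ × Matrix (Fin m) (Fin n) ℝ × Matrix (Fin m) (Fin m) ℝ

/-- Elements of the Jacobi group `G^J = Sp(n,ℝ) ⋉ H_ℝ^(n,m)` (the underlying set). -/
abbrev JacobiElt (m n : ℕ) := Matrix (Fin n ⊕ Fin n) (Fin n ⊕ Fin n) ℝ × Heis m n

/-- `(λ̃, μ̃) = (λ, μ) M'` in terms of the blocks of `M'`. -/
def heisTwist {m n : ℕ} (lm : Matrix (Fin m) (Fin n) ℝ × Matrix (Fin m) (Fin n) ℝ)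
    (M' : Matrix (Fin n ⊕ Fin n) (Fin n ⊕ Fin n) ℝ) :
    Matrix (Fin m) (Fin n) ℝ × Matrix (Fin m) (Fin n) ℝ :=
  (lm.1 * M'.toBlocks₁₁ + lm.2 * M'.toBlocks₂₁,
   lm.1 * M'.toBlocks₁₂ + lm.2 * M'.toBlocks₂₂)

/-- The Jacobi group multiplication. -/
def jacobiMul {m n : ℕ} (g g' : JacobiElt m n) : JacobiElt m n :=
  let t := heisTwist (g.2.1, g.2.2.1) g'.1
  (g.1 * g'.1,
   (t.1 + g'.2.1, t.2 + g'.2.2.1,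
    g.2.2.2 + g'.2.2.2 + t.1 * (g'.2.2.1)ᵀ - t.2 * (g'.2.1)ᵀ))

/-- The action `(M,(λ,μ,κ))·(Z,W) = (M⟨Z⟩, (W + λZ + μ)(CZ+D)⁻¹)` of the Jacobi
group on `H_{n,m} = H_n × ℂ^(m×n)`. -/
def jacobiAct {m n : ℕ} (g : JacobiElt m n)
    (p : Matrix (Fin n) (Fin n) ℂ × Matrix (Fin m) (Fin n) ℂ) :
    Matrix (Fin n) (Fin n) ℂ × Matrix (Fin m) (Fin n) ℂ :=
  (siegelAct g.1 p.1,
   (p.2 + (g.2.1).map Complex.ofReal * p.1 + (g.2.2.1).map Complex.ofReal) *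
     (blkC g.1 * p.1 + blkD g.1)⁻¹)


section Aux2


open Complex

variable {n : ℕ}

lemma mapC_mul {p q r : ℕ} (X : Matrix (Fin p) (Fin q) ℝ) (Y : Matrix (Fin q) (Fin r) ℝ) :
    (X * Y).map Complex.ofReal = X.map Complex.ofReal * Y.map Complex.ofReal := by
  ext i j
  simp [Matrix.mul_apply, Matrix.map_apply]

lemma mapC_add {p q : ℕ} (X Y : Matrix (Fin p) (Fin q) ℝ) :
    (X + Y).map Complex.ofReal = X.map Complex.ofReal + Y.map Complex.ofReal := by
  ext i j; simp

lemma mapC_transpose {p q : ℕ} (X : Matrix (Fin p) (Fin q) ℝ) :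
    Xᵀ.map Complex.ofReal = (X.map Complex.ofReal)ᵀ := by
  ext i j; simp

lemma mapC_conjTranspose {p q : ℕ} (X : Matrix (Fin p) (Fin q) ℝ) :
    (X.map Complex.ofReal)ᴴ = Xᵀ.map Complex.ofReal := by
  ext i j; simp [Matrix.conjTranspose_apply]

lemma toBlocks₁₁_mul (M N : Matrix (Fin n ⊕ Fin n) (Fin n ⊕ Fin n) ℝ) :
    (M * N).toBlocks₁₁ = M.toBlocks₁₁ * N.toBlocks₁₁ + M.toBlocks₁₂ * N.toBlocks₂₁ := by
  ext i j
  simp [Matrix.mul_apply, Matrix.toBlocks₁₁, Matrix.toBlocks₁₂, Matrix.toBlocks₂₁,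
    Fintype.sum_sum_type]

lemma toBlocks₁₂_mul (M N : Matrix (Fin n ⊕ Fin n) (Fin n ⊕ Fin n) ℝ) :
    (M * N).toBlocks₁₂ = M.toBlocks₁₁ * N.toBlocks₁₂ + M.toBlocks₁₂ * N.toBlocks₂₂ := by
  ext i j
  simp [Matrix.mul_apply, Matrix.toBlocks₁₁, Matrix.toBlocks₁₂, Matrix.toBlocks₂₂,
    Fintype.sum_sum_type]

lemma toBlocks₂₁_mul (M N : Matrix (Fin n ⊕ Fin n) (Fin n ⊕ Fin n) ℝ) :
    (M * N).toBlocks₂₁ = M.toBlocks₂₁ * N.toBlocks₁₁ + M.toBlocks₂₂ * N.toBlocks₂₁ := by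
  ext i j
  simp [Matrix.mul_apply, Matrix.toBlocks₂₁, Matrix.toBlocks₂₂, Matrix.toBlocks₁₁,
    Fintype.sum_sum_type]

lemma toBlocks₂₂_mul (M N : Matrix (Fin n ⊕ Fin n) (Fin n ⊕ Fin n) ℝ) :
    (M * N).toBlocks₂₂ = M.toBlocks₂₁ * N.toBlocks₁₂ + M.toBlocks₂₂ * N.toBlocks₂₂ := by
  ext i j
  simp [Matrix.mul_apply, Matrix.toBlocks₂₁, Matrix.toBlocks₂₂, Matrix.toBlocks₁₂,
    Fintype.sum_sum_type]



end Aux2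
section Symp
open Complex
variable {n : ℕ} {M : Matrix (Fin n ⊕ Fin n) (Fin n ⊕ Fin n) ℝ}

lemma symp_rel (h : IsSymplectic M) :
    M.toBlocks₁₁ᵀ * M.toBlocks₂₁ = M.toBlocks₂₁ᵀ * M.toBlocks₁₁ ∧
    M.toBlocks₁₂ᵀ * M.toBlocks₂₂ = M.toBlocks₂₂ᵀ * M.toBlocks₁₂ ∧
    M.toBlocks₁₁ᵀ * M.toBlocks₂₂ - M.toBlocks₂₁ᵀ * M.toBlocks₁₂ = 1 := by
  set A := M.toBlocks₁₁; set B := M.toBlocks₁₂; set C := M.toBlocks₂₁; set D := M.toBlocks₂₂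
  have hM : M = Matrix.fromBlocks A B C D := (Matrix.fromBlocks_toBlocks M).symm
  unfold IsSymplectic symplJ at h
  rw [hM] at h
  rw [Matrix.fromBlocks_transpose, Matrix.fromBlocks_multiply, Matrix.fromBlocks_multiply] at h
  have h11 := congrArg Matrix.toBlocks₁₁ h
  have h12 := congrArg Matrix.toBlocks₁₂ h
  have h22 := congrArg Matrix.toBlocks₂₂ h
  simp only [Matrix.toBlocks_fromBlocks₁₁, Matrix.toBlocks_fromBlocks₁₂,
    Matrix.toBlocks_fromBlocks₂₂] at h11 h12 h22
  refine ⟨by linear_combination (norm := noncomm_ring) h11, by linear_combination (norm := noncomm_ring) h22, by linear_combination (norm := noncomm_ring) h12⟩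

end Symp

section Inv
open Complex
variable {n : ℕ} {M : Matrix (Fin n ⊕ Fin n) (Fin n ⊕ Fin n) ℝ}
  {Z : Matrix (Fin n) (Fin n) ℂ}

lemma symp_relC (h : IsSymplectic M) :
    (blkA M)ᵀ * blkC M = (blkC M)ᵀ * blkA M ∧
    (blkB M)ᵀ * blkD M = (blkD M)ᵀ * blkB M ∧
    (blkA M)ᵀ * blkD M - (blkC M)ᵀ * blkB M = 1 := by
  obtain ⟨h1, h2, h3⟩ := symp_rel h
  unfold blkA blkB blkC blkD
  refine ⟨?_, ?_, ?_⟩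
  · rw [← mapC_transpose, ← mapC_transpose, ← mapC_mul, ← mapC_mul, h1]
  · rw [← mapC_transpose, ← mapC_transpose, ← mapC_mul, ← mapC_mul, h2]
  · rw [← mapC_transpose, ← mapC_transpose, ← mapC_mul, ← mapC_mul]
    have := congrArg (fun X => X.map Complex.ofReal) h3
    rw [Matrix.map_sub _ (fun a b => Complex.ofReal_sub a b)] at this
    rw [this]
    ext i j; by_cases hij : i = j <;> simp [Matrix.one_apply, hij]

/-- The fundamental identity `(AZ+B)ᴴ(CZ+D) - (CZ+D)ᴴ(AZ+B) = Zᴴ - Z`. -/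
lemma key_identity (h : IsSymplectic M) (_hZs : Z.IsSymm) :
    (blkA M * Z + blkB M)ᴴ * (blkC M * Z + blkD M)
      - (blkC M * Z + blkD M)ᴴ * (blkA M * Z + blkB M) = Zᴴ - Z := by
  obtain ⟨h1, h2, h3⟩ := symp_relC h
  have hT : ∀ X : Matrix (Fin n) (Fin n) ℝ,
      (X.map Complex.ofReal)ᴴ = (X.map Complex.ofReal)ᵀ := by
    intro X; ext i j; simp [Matrix.conjTranspose_apply]
  have h4 : (blkD M)ᵀ * blkA M - (blkB M)ᵀ * blkC M = 1 := by
    have := congrArg Matrix.transpose h3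
    simpa [Matrix.transpose_sub, Matrix.transpose_mul] using this
  have e1 : Zᴴ * ((blkA M)ᵀ * blkC M) * Z = Zᴴ * ((blkC M)ᵀ * blkA M) * Z := by rw [h1]
  have e2 : (blkB M)ᵀ * blkD M = (blkD M)ᵀ * blkB M := h2
  have e3 : Zᴴ * ((blkA M)ᵀ * blkD M) - Zᴴ * ((blkC M)ᵀ * blkB M) = Zᴴ := by
    have := congrArg (fun X => Zᴴ * X) h3
    simpa [Matrix.mul_sub] using this
  have e4 : (blkD M)ᵀ * blkA M * Z - (blkB M)ᵀ * blkC M * Z = Z := by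
    have := congrArg (fun X => X * Z) h4
    simpa [Matrix.sub_mul] using this
  unfold blkA blkB blkC blkD at *
  simp only [Matrix.conjTranspose_add, Matrix.conjTranspose_mul, hT]
  simp only [← mapC_transpose] at e1 e2 e3 e4 ⊢
  linear_combination (norm := noncomm_ring) e1 + e3 - e4 + e2

end Inv

section Pos
open Complex
variable {n : ℕ}

lemma re_quad (P : Matrix (Fin n) (Fin n) ℝ) (v : Fin n → ℂ) :
    (star v ⬝ᵥ ((P.map Complex.ofReal) *ᵥ v)).re
      = (fun i => (v i).re) ⬝ᵥ (P *ᵥ fun i => (v i).re)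
        + (fun i => (v i).im) ⬝ᵥ (P *ᵥ fun i => (v i).im) := by
  simp only [dotProduct, Matrix.mulVec, dotProduct, Finset.mul_sum,
    ← Finset.sum_add_distrib, Complex.re_sum]
  refine Finset.sum_congr rfl fun i _ => ?_
  refine Finset.sum_congr rfl fun j _ => ?_
  simp [Matrix.map_apply, Complex.mul_re, Complex.mul_im, Pi.star_apply, RCLike.star_def]

lemma posdef_quad_ne_zero {P : Matrix (Fin n) (Fin n) ℝ} (hP : P.PosDef)
    {v : Fin n → ℂ} (hv : v ≠ 0) :
    star v ⬝ᵥ ((P.map Complex.ofReal) *ᵥ v) ≠ 0 := by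
  intro h0
  have hre := congrArg Complex.re h0
  rw [re_quad] at hre
  simp only [Complex.zero_re] at hre
  set a := fun i => (v i).re
  set b := fun i => (v i).im
  have hab : a ≠ 0 ∨ b ≠ 0 := by
    by_contra hc
    push_neg at hc
    apply hv
    funext i
    have h1 := congrFun hc.1 i
    have h2 := congrFun hc.2 i
    simp only [a, b, Pi.zero_apply] at h1 h2
    exact Complex.ext h1 h2
  have hA : 0 ≤ a ⬝ᵥ (P *ᵥ a) := hP.posSemidef.dotProduct_mulVec_nonneg a
  have hB : 0 ≤ b ⬝ᵥ (P *ᵥ b) := hP.posSemidef.dotProduct_mulVec_nonneg b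
  rcases hab with ha | hb
  · have := hP.dotProduct_mulVec_pos ha
    rw [star_trivial] at this
    linarith
  · have := hP.dotProduct_mulVec_pos hb
    rw [star_trivial] at this
    linarith

lemma det_unit_of_symplectic {M : Matrix (Fin n ⊕ Fin n) (Fin n ⊕ Fin n) ℝ}
    {Z : Matrix (Fin n) (Fin n) ℂ} (h : IsSymplectic M) (hZ : InSiegel Z) :
    IsUnit (blkC M * Z + blkD M).det := by
  rw [isUnit_iff_ne_zero]
  intro h0
  obtain ⟨v, hv, hNv⟩ := (Matrix.exists_mulVec_eq_zero_iff).2 h0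
  have hkey := key_identity h hZ.1
  have hzero : star v ⬝ᵥ ((Zᴴ - Z) *ᵥ v) = 0 := by
    rw [← hkey]
    rw [Matrix.sub_mulVec]
    have t1 : ((blkA M * Z + blkB M)ᴴ * (blkC M * Z + blkD M)) *ᵥ v = 0 := by
      rw [← Matrix.mulVec_mulVec, hNv, Matrix.mulVec_zero]
    have t2 : star v ⬝ᵥ (((blkC M * Z + blkD M)ᴴ * (blkA M * Z + blkB M)) *ᵥ v) = 0 := by
      rw [← Matrix.mulVec_mulVec, Matrix.dotProduct_mulVec, ← Matrix.star_mulVec, hNv]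
      simp
    rw [dotProduct_sub, t1, t2]
    simp
  -- Zᴴ - Z = (-2i) • (Im Z mapped)
  have hdiff : Zᴴ - Z = (-(2:ℂ) * Complex.I) • ((Z.map Complex.im).map Complex.ofReal) := by
    ext i j
    have hsymm : Z j i = Z i j := by
      have := congrFun (congrFun hZ.1 i) j
      simpa [Matrix.transpose_apply] using this
    simp [Matrix.conjTranspose_apply, hsymm, Matrix.map_apply]
    rw [Complex.ext_iff]
    simp [Complex.conj_re, Complex.conj_im]
    ring
  rw [hdiff] at hzero
  rw [Matrix.smul_mulVec, dotProduct_smul] at hzero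
  have hne : (-(2:ℂ) * Complex.I) ≠ 0 := by
    simp [Complex.I_ne_zero]
  have := (smul_eq_zero.mp hzero).resolve_left hne
  exact posdef_quad_ne_zero hZ.2 hv this

end Pos

section Main
open Complex
variable {n : ℕ}

lemma isSymplectic_mul {M M' : Matrix (Fin n ⊕ Fin n) (Fin n ⊕ Fin n) ℝ}
    (h : IsSymplectic M) (h' : IsSymplectic M') : IsSymplectic (M * M') := by
  unfold IsSymplectic at *
  rw [Matrix.transpose_mul]
  have : M'ᵀ * Mᵀ * symplJ n * (M * M') = M'ᵀ * (Mᵀ * symplJ n * M) * M' := by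
    noncomm_ring
  rw [this, h, h']

lemma blkA_mul (M N : Matrix (Fin n ⊕ Fin n) (Fin n ⊕ Fin n) ℝ) :
    blkA (M * N) = blkA M * blkA N + blkB M * blkC N := by
  unfold blkA blkB blkC
  rw [toBlocks₁₁_mul, mapC_add, mapC_mul, mapC_mul]

lemma blkB_mul (M N : Matrix (Fin n ⊕ Fin n) (Fin n ⊕ Fin n) ℝ) :
    blkB (M * N) = blkA M * blkB N + blkB M * blkD N := by
  unfold blkA blkB blkD
  rw [toBlocks₁₂_mul, mapC_add, mapC_mul, mapC_mul]

lemma blkC_mul (M N : Matrix (Fin n ⊕ Fin n) (Fin n ⊕ Fin n) ℝ) :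
    blkC (M * N) = blkC M * blkA N + blkD M * blkC N := by
  unfold blkA blkC blkD
  rw [toBlocks₂₁_mul, mapC_add, mapC_mul, mapC_mul]

lemma blkD_mul (M N : Matrix (Fin n ⊕ Fin n) (Fin n ⊕ Fin n) ℝ) :
    blkD (M * N) = blkC M * blkB N + blkD M * blkD N := by
  unfold blkB blkC blkD
  rw [toBlocks₂₂_mul, mapC_add, mapC_mul, mapC_mul]

lemma keyA {M M' : Matrix (Fin n ⊕ Fin n) (Fin n ⊕ Fin n) ℝ}
    {Z : Matrix (Fin n) (Fin n) ℂ} (hN' : IsUnit (blkC M' * Z + blkD M').det) :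
    blkA M * siegelAct M' Z + blkB M
      = (blkA (M * M') * Z + blkB (M * M')) * (blkC M' * Z + blkD M')⁻¹ := by
  rw [blkA_mul, blkB_mul]
  unfold siegelAct
  have hB : blkB M
      = blkB M * ((blkC M' * Z + blkD M') * (blkC M' * Z + blkD M')⁻¹) := by
    rw [Matrix.mul_nonsing_inv _ hN', mul_one]
  conv_lhs => rw [hB]
  noncomm_ring

lemma keyC {M M' : Matrix (Fin n ⊕ Fin n) (Fin n ⊕ Fin n) ℝ}
    {Z : Matrix (Fin n) (Fin n) ℂ} (hN' : IsUnit (blkC M' * Z + blkD M').det) :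
    blkC M * siegelAct M' Z + blkD M
      = (blkC (M * M') * Z + blkD (M * M')) * (blkC M' * Z + blkD M')⁻¹ := by
  rw [blkC_mul, blkD_mul]
  unfold siegelAct
  have hD : blkD M
      = blkD M * ((blkC M' * Z + blkD M') * (blkC M' * Z + blkD M')⁻¹) := by
    rw [Matrix.mul_nonsing_inv _ hN', mul_one]
  conv_lhs => rw [hD]
  noncomm_ring

lemma keyW {m : ℕ} {M' : Matrix (Fin n ⊕ Fin n) (Fin n ⊕ Fin n) ℝ}
    {Z : Matrix (Fin n) (Fin n) ℂ} (lam mu lam' mu' : Matrix (Fin m) (Fin n) ℝ)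
    (W : Matrix (Fin m) (Fin n) ℂ) (hN' : IsUnit (blkC M' * Z + blkD M').det) :
    (W + lam'.map Complex.ofReal * Z + mu'.map Complex.ofReal) * (blkC M' * Z + blkD M')⁻¹
      + lam.map Complex.ofReal * siegelAct M' Z + mu.map Complex.ofReal
    = (W + (lam * M'.toBlocks₁₁ + mu * M'.toBlocks₂₁ + lam').map Complex.ofReal * Z
         + (lam * M'.toBlocks₁₂ + mu * M'.toBlocks₂₂ + mu').map Complex.ofReal)
      * (blkC M' * Z + blkD M')⁻¹ := by
  have hmu : mu.map Complex.ofReal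
      = mu.map Complex.ofReal * ((blkC M' * Z + blkD M') * (blkC M' * Z + blkD M')⁻¹) := by
    rw [Matrix.mul_nonsing_inv _ hN', Matrix.mul_one]
  conv_lhs => rw [hmu]
  rw [mapC_add, mapC_add, mapC_mul, mapC_mul, mapC_add, mapC_add, mapC_mul, mapC_mul]
  unfold siegelAct blkA blkB blkC blkD
  simp only [Matrix.add_mul, Matrix.mul_add, Matrix.mul_assoc]
  abel

/-- The map `(M,(λ,μ,κ))·(Z,W) = (M⟨Z⟩, (W+λZ+μ)(CZ+D)⁻¹)` defines a group action
of the Jacobi group on `H_{n,m}`: the action of a product is the composition of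
the actions. -/
theorem stmt_7 {m n : ℕ} (g g' : JacobiElt m n)
    (hg : IsSymplectic g.1) (hg' : IsSymplectic g'.1)
    (Z : Matrix (Fin n) (Fin n) ℂ) (hZ : InSiegel Z)
    (W : Matrix (Fin m) (Fin n) ℂ) :
    jacobiAct (jacobiMul g g') (Z, W) = jacobiAct g (jacobiAct g' (Z, W)) := by
  obtain ⟨M, lam, mu, kap⟩ := g
  obtain ⟨M', lam', mu', kap'⟩ := g'
  simp only at hg hg'
  have hMM' : IsSymplectic (M * M') := isSymplectic_mul hg hg'
  have hN' : IsUnit (blkC M' * Z + blkD M').det := det_unit_of_symplectic hg' hZ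
  have hN'' : IsUnit (blkC (M * M') * Z + blkD (M * M')).det := det_unit_of_symplectic hMM' hZ
  have cancel : ∀ (X : Matrix (Fin m) (Fin n) ℂ) (Y : Matrix (Fin n) (Fin n) ℂ),
      X * (blkC M' * Z + blkD M')⁻¹ * ((blkC M' * Z + blkD M') * Y) = X * Y := by
    intro X Y
    rw [Matrix.mul_assoc, ← Matrix.mul_assoc ((blkC M' * Z + blkD M')⁻¹),
      Matrix.nonsing_inv_mul _ hN', Matrix.one_mul]
  have cancel' : ∀ (X Y : Matrix (Fin n) (Fin n) ℂ),
      X * (blkC M' * Z + blkD M')⁻¹ * ((blkC M' * Z + blkD M') * Y) = X * Y := by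
    intro X Y
    rw [Matrix.mul_assoc, ← Matrix.mul_assoc ((blkC M' * Z + blkD M')⁻¹),
      Matrix.nonsing_inv_mul _ hN', Matrix.one_mul]
  simp only [jacobiAct, jacobiMul, heisTwist, Prod.mk.injEq]
  constructor
  · show siegelAct (M * M') Z = siegelAct M (siegelAct M' Z)
    have : siegelAct M (siegelAct M' Z)
        = (blkA M * siegelAct M' Z + blkB M) * (blkC M * siegelAct M' Z + blkD M)⁻¹ := rfl
    rw [this, keyA hN', keyC hN', Matrix.mul_inv_rev,
      Matrix.nonsing_inv_nonsing_inv _ hN', cancel']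
    rfl
  · rw [keyC hN', Matrix.mul_inv_rev, Matrix.nonsing_inv_nonsing_inv _ hN']
    rw [← Matrix.mul_assoc, keyW lam mu lam' mu' W hN',
      Matrix.mul_assoc _ ((blkC M' * Z + blkD M')⁻¹) (blkC M' * Z + blkD M'),
      Matrix.nonsing_inv_mul _ hN', Matrix.mul_one]

end Main
end
end

section
/- Let P be a homogeneous pluriharmonic polynomial on ℂ^(m×n) with respect to a positive definite symmetric matrix S, and let C ∈ ℂ^(n×n) be symmetric. Then P(∂_W) e^{tr(W C Wᵀ S⁻¹)} = P(2 S⁻¹ W C) · e^{tr(W C Wᵀ S⁻¹)} as functions of W ∈ ℂ^(m×n). -/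
open MvPolynomial Matrix

noncomputable section

/-- Index set for the variables `W₁₁, …, W_{mn}`; a point of `ℂ^(m×n)` is a function
`Idx m n → ℂ`. -/
abbrev Idx (m n : ℕ) := Fin m × Fin n

/-- The point `W : Idx m n → ℂ` regarded as an `m × n` matrix. -/
def toMat {m n : ℕ} (W : Idx m n → ℂ) : Matrix (Fin m) (Fin n) ℂ :=
  Matrix.of fun k l => W (k, l)

/-- The directional derivative operator `∂/∂W_{kl}` on functions `ℂ^(m×n) → ℂ`. -/
def dirDeriv {m n : ℕ} (i : Idx m n) : Function.End ((Idx m n → ℂ) → ℂ) :=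
  fun f W => fderiv ℂ f W (Pi.single i 1)

/-- The iterated derivative `∂^α = ∏_{kl} (∂/∂W_{kl})^{α_{kl}}` on functions. -/
def multiDeriv {m n : ℕ} (α : Idx m n →₀ ℕ) : Function.End ((Idx m n → ℂ) → ℂ) :=
  ((Finset.univ : Finset (Idx m n)).toList.map fun i => dirDeriv i ^ α i).prod

/-- The differential operator `P(∂_W)` applied to a function `f : ℂ^(m×n) → ℂ`. -/
def diffOpFun {m n : ℕ} (P : MvPolynomial (Idx m n) ℂ) (f : (Idx m n → ℂ) → ℂ) :
    (Idx m n → ℂ) → ℂ :=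
  fun W => ∑ α ∈ P.support, P.coeff α * multiDeriv α f W

/-- The operator `Δ_{i,j} = Σ_{p,q} (S⁻¹)_{pq} ∂²/(∂W_{pi} ∂W_{qj})`. -/
def laplacian {m n : ℕ} (S : Matrix (Fin m) (Fin m) ℝ) (i j : Fin n)
    (P : MvPolynomial (Idx m n) ℂ) : MvPolynomial (Idx m n) ℂ :=
  ∑ p : Fin m, ∑ q : Fin m,
    ((S⁻¹ p q : ℝ) : ℂ) • pderiv (p, i) (pderiv (q, j) P)

/-- `P` is pluriharmonic with respect to `S` iff `Δ_{i,j} P = 0` for all `i, j`. -/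
def Pluriharmonic {m n : ℕ} (S : Matrix (Fin m) (Fin m) ℝ)
    (P : MvPolynomial (Idx m n) ℂ) : Prop :=
  ∀ i j : Fin n, laplacian S i j P = 0

namespace Aux
variable {m n : ℕ}

theorem degree_add (a b : Idx m n →₀ ℕ) : (a + b).degree = a.degree + b.degree := by
  have h : ∀ c : Idx m n →₀ ℕ, c.degree = (Finsupp.weight 1) c := by
    intro c; rw [Finsupp.degree_eq_weight_one]; rfl
  rw [h, h, h, map_add]

theorem degree_single (i : Idx m n) : (Finsupp.single i 1).degree = 1 := by
  simp [Finsupp.degree_apply, Finsupp.support_single_ne_zero]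

/-- second partial derivatives commute -/
theorem pderiv_comm (i j : Idx m n) (P : MvPolynomial (Idx m n) ℂ) :
    pderiv i (pderiv j P) = pderiv j (pderiv i P) := by
  induction P using MvPolynomial.induction_on' with
  | add p q hp hq => simp [map_add, hp, hq]
  | monomial s a =>
    simp only [pderiv_monomial]
    rw [tsub_right_comm]
    congr 1
    rcases eq_or_ne i j with rfl | hij
    · rfl
    · have h1 : ((s - Finsupp.single j 1 : Idx m n →₀ ℕ)) i = s i := by
        simp [Finsupp.tsub_apply, Finsupp.single_apply, Ne.symm hij]
      have h2 : ((s - Finsupp.single i 1 : Idx m n →₀ ℕ)) j = s j := by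
        simp [Finsupp.tsub_apply, Finsupp.single_apply, hij]
      rw [h1, h2]; ring

theorem pderiv_isHomogeneous {P : MvPolynomial (Idx m n) ℂ} {d : ℕ}
    (h : P.IsHomogeneous d) (i : Idx m n) : (pderiv i P).IsHomogeneous (d - 1) := by
  rw [← P.support_sum_monomial_coeff, map_sum]
  apply IsHomogeneous.sum
  intro α hα
  rw [pderiv_monomial]
  by_cases hαi : α i = 0
  · simp [hαi, isHomogeneous_zero]
  · apply isHomogeneous_monomial
    have hdeg : α.degree = d := by
      rw [Finsupp.degree_eq_weight_one]; exact h (mem_support_iff.mp hα)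
    have hle : Finsupp.single i 1 ≤ α := by
      rw [Finsupp.single_le_iff]; omega
    have heq : (α - Finsupp.single i 1) + Finsupp.single i 1 = α := tsub_add_cancel_of_le hle
    have h2 : (α - Finsupp.single i 1).degree + (Finsupp.single i 1).degree = d := by
      rw [← degree_add, heq, hdeg]
    rw [degree_single] at h2
    omega

theorem pderiv_eq_zero_of_isHomogeneous_zero {P : MvPolynomial (Idx m n) ℂ}
    (h : P.IsHomogeneous 0) (i : Idx m n) : pderiv i P = 0 := by
  rw [← P.support_sum_monomial_coeff, map_sum]
  apply Finset.sum_eq_zero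
  intro α hα
  have hdeg : α.degree = 0 := by
    rw [Finsupp.degree_eq_weight_one]; exact h (mem_support_iff.mp hα)
  rw [Finsupp.degree_eq_zero_iff] at hdeg
  subst hdeg
  simp [pderiv_monomial]


variable (T : Matrix (Fin m) (Fin m) ℂ) (Cm : Matrix (Fin n) (Fin n) ℂ)

def ee (a b : Idx m n) : ℂ := T a.1 b.1 * Cm a.2 b.2

def cc (a b : Idx m n) : ℂ := ee T Cm a b + ee T Cm b a

theorem cc_symm (a b : Idx m n) : cc T Cm a b = cc T Cm b a := add_comm _ _

def coef (u v : Idx m n) : ℂ := Cm u.2 v.2 * T v.1 u.1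

def Gp : MvPolynomial (Idx m n) ℂ :=
  ∑ u : Idx m n, ∑ v : Idx m n, coef T Cm u v • (X u * X v)

def Lp (i : Idx m n) : MvPolynomial (Idx m n) ℂ := pderiv i (Gp T Cm)

def lap : Module.End ℂ (MvPolynomial (Idx m n) ℂ) :=
  ∑ a : Idx m n, ∑ b : Idx m n,
    ee T Cm a b • ((pderiv a).toLinearMap ∘ₗ (pderiv b).toLinearMap)

def Aapp : List (Idx m n) → MvPolynomial (Idx m n) ℂ → MvPolynomial (Idx m n) ℂ
  | [], Q => Q
  | i :: l, Q => Lp T Cm i * Aapp l Q + pderiv i (Aapp l Q)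

def idxList (α : Idx m n →₀ ℕ) : List (Idx m n) :=
  (Finset.univ : Finset (Idx m n)).toList.flatMap fun i => List.replicate (α i) i

theorem lap_apply (P : MvPolynomial (Idx m n) ℂ) :
    lap T Cm P = ∑ a : Idx m n, ∑ b : Idx m n, ee T Cm a b • pderiv a (pderiv b P) := by
  simp [lap, LinearMap.sum_apply, LinearMap.smul_apply, LinearMap.comp_apply]

theorem lap_pderiv (j : Idx m n) (P : MvPolynomial (Idx m n) ℂ) :
    lap T Cm (pderiv j P) = pderiv j (lap T Cm P) := by
  rw [lap_apply, lap_apply, map_sum]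
  refine Finset.sum_congr rfl fun a _ => ?_
  rw [map_sum]
  refine Finset.sum_congr rfl fun b _ => ?_
  rw [Derivation.map_smul]
  rw [pderiv_comm b j P, pderiv_comm a j (pderiv b P)]

theorem lap_pow_pderiv (k : ℕ) (j : Idx m n) (P : MvPolynomial (Idx m n) ℂ) :
    (lap T Cm ^ k) (pderiv j P) = pderiv j ((lap T Cm ^ k) P) := by
  induction k generalizing P with
  | zero => simp
  | succ k ih =>
    rw [pow_succ, Module.End.mul_apply, Module.End.mul_apply, lap_pderiv, ih]

theorem lap_isHomogeneous {P : MvPolynomial (Idx m n) ℂ} {d : ℕ}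
    (h : P.IsHomogeneous (d + 2)) : (lap T Cm P).IsHomogeneous d := by
  rw [lap_apply]
  refine IsHomogeneous.sum _ _ _ fun a _ => IsHomogeneous.sum _ _ _ fun b _ => ?_
  rw [smul_eq_C_mul]
  have h1 : (pderiv b P).IsHomogeneous (d + 1) := by
    have := pderiv_isHomogeneous h b; simpa using this
  have h2 : (pderiv a (pderiv b P)).IsHomogeneous d := by
    have := pderiv_isHomogeneous h1 a; simpa using this
  simpa using (isHomogeneous_C (σ := Idx m n) (ee T Cm a b)).mul h2

theorem lap_eq_zero_of_low {P : MvPolynomial (Idx m n) ℂ} {d : ℕ}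
    (h : P.IsHomogeneous d) (hd : d ≤ 1) : lap T Cm P = 0 := by
  rw [lap_apply]
  refine Finset.sum_eq_zero fun a _ => Finset.sum_eq_zero fun b _ => ?_
  interval_cases d
  · rw [pderiv_eq_zero_of_isHomogeneous_zero h b, map_zero, smul_zero]
  · have h1 : (pderiv b P).IsHomogeneous 0 := by simpa using pderiv_isHomogeneous h b
    rw [pderiv_eq_zero_of_isHomogeneous_zero h1 a, smul_zero]

theorem lap_pow_eq_zero {P : MvPolynomial (Idx m n) ℂ} {d k : ℕ}
    (h : P.IsHomogeneous d) (hk : d < 2 * k) : (lap T Cm ^ k) P = 0 := by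
  induction k generalizing P d with
  | zero => omega
  | succ k ih =>
    rw [pow_succ, Module.End.mul_apply]
    rcases le_or_gt d 1 with hd | hd
    · rw [lap_eq_zero_of_low T Cm h hd, map_zero]
    · obtain ⟨e, rfl⟩ : ∃ e, d = e + 2 := ⟨d - 2, by omega⟩
      exact ih (lap_isHomogeneous T Cm h) (by omega)

theorem lap_mul_X (i : Idx m n) (P : MvPolynomial (Idx m n) ℂ) :
    lap T Cm (X i * P) =
      X i * lap T Cm P + ∑ j : Idx m n, cc T Cm i j • pderiv j P := by
  have key : ∀ a b : Idx m n, pderiv a (pderiv b (X i * P)) =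
      (if b = i then pderiv a P else 0) + (if a = i then pderiv b P else 0)
        + X i * pderiv a (pderiv b P) := by
    intro a b
    rw [pderiv_mul]
    rcases eq_or_ne b i with rfl | hb
    · rw [pderiv_X_self, one_mul, if_pos rfl, map_add, pderiv_mul]
      rcases eq_or_ne a b with rfl | ha
      · rw [pderiv_X_self, one_mul, if_pos rfl]; ring
      · rw [pderiv_X_of_ne (Ne.symm ha), if_neg ha, zero_mul]; ring
    · rw [pderiv_X_of_ne (Ne.symm hb), zero_mul, zero_add, pderiv_mul, if_neg hb]
      rcases eq_or_ne a i with rfl | ha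
      · rw [pderiv_X_self, one_mul, if_pos rfl]; ring
      · rw [pderiv_X_of_ne (Ne.symm ha), zero_mul, if_neg ha]; ring
  have e1 : (∑ a : Idx m n, ∑ b : Idx m n,
      ee T Cm a b • (if b = i then pderiv a P else 0)) =
      ∑ j : Idx m n, ee T Cm j i • pderiv j P := by
    refine Finset.sum_congr rfl fun a _ => ?_
    rw [Finset.sum_eq_single i]
    · rw [if_pos rfl]
    · intro b _ hbi; rw [if_neg hbi, smul_zero]
    · intro h; exact absurd (Finset.mem_univ i) h
  have e2 : (∑ a : Idx m n, ∑ b : Idx m n,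
      ee T Cm a b • (if a = i then pderiv b P else 0)) =
      ∑ j : Idx m n, ee T Cm i j • pderiv j P := by
    rw [Finset.sum_eq_single i]
    · refine Finset.sum_congr rfl fun b _ => ?_; rw [if_pos rfl]
    · intro a _ hai
      refine Finset.sum_eq_zero fun b _ => ?_; rw [if_neg hai, smul_zero]
    · intro h; exact absurd (Finset.mem_univ i) h
  have e3 : (∑ a : Idx m n, ∑ b : Idx m n,
      ee T Cm a b • (X i * pderiv a (pderiv b P))) = X i * lap T Cm P := by
    rw [lap_apply, Finset.mul_sum]
    refine Finset.sum_congr rfl fun a _ => ?_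
    rw [Finset.mul_sum]
    refine Finset.sum_congr rfl fun b _ => ?_
    rw [mul_smul_comm]
  have expand : lap T Cm (X i * P) =
      (∑ a : Idx m n, ∑ b : Idx m n, ee T Cm a b • (if b = i then pderiv a P else 0))
      + (∑ a : Idx m n, ∑ b : Idx m n, ee T Cm a b • (if a = i then pderiv b P else 0))
      + (∑ a : Idx m n, ∑ b : Idx m n, ee T Cm a b • (X i * pderiv a (pderiv b P))) := by
    rw [lap_apply]
    simp only [key, smul_add, Finset.sum_add_distrib]
  have hD : (∑ j : Idx m n, cc T Cm i j • pderiv j P) =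
      (∑ j : Idx m n, ee T Cm j i • pderiv j P)
        + ∑ j : Idx m n, ee T Cm i j • pderiv j P := by
    rw [← Finset.sum_add_distrib]
    refine Finset.sum_congr rfl fun j _ => ?_
    rw [← add_smul, cc, add_comm]
  rw [expand, e1, e2, e3, hD]
  ring

theorem lap_pow_mul_X (i : Idx m n) (k : ℕ) (P : MvPolynomial (Idx m n) ℂ) :
    (lap T Cm ^ (k + 1)) (X i * P) =
      X i * (lap T Cm ^ (k + 1)) P +
        ((k + 1 : ℕ) : ℂ) • ∑ j : Idx m n, cc T Cm i j • pderiv j ((lap T Cm ^ k) P) := by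
  induction k generalizing P with
  | zero => simp [lap_mul_X]
  | succ k ih =>
    have hpow : ∀ Q : MvPolynomial (Idx m n) ℂ,
        (lap T Cm ^ (k + 1 + 1)) Q = (lap T Cm ^ (k + 1)) (lap T Cm Q) := by
      intro Q; rw [pow_succ, Module.End.mul_apply]
    have hpow1 : ∀ Q : MvPolynomial (Idx m n) ℂ,
        (lap T Cm ^ (k + 1)) Q = (lap T Cm ^ k) (lap T Cm Q) := by
      intro Q; rw [pow_succ, Module.End.mul_apply]
    rw [hpow, lap_mul_X, map_add, map_sum, ih (lap T Cm P)]
    have h3 : ∀ j : Idx m n, (lap T Cm ^ (k + 1)) (cc T Cm i j • pderiv j P) =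
        cc T Cm i j • pderiv j ((lap T Cm ^ (k + 1)) P) := fun j => by
      rw [LinearMap.map_smul, lap_pow_pderiv]
    simp only [h3, ← hpow1]
    rw [add_assoc]
    congr 1
    have hc : ((k + 1 + 1 : ℕ) : ℂ) = ((k + 1 : ℕ) : ℂ) + 1 := by push_cast; ring
    rw [hc, add_smul, one_smul]

theorem aeval_eq_eval (x : Idx m n → ℂ) (p : MvPolynomial (Idx m n) ℂ) :
    aeval x p = eval x p := rfl

theorem eval_bind₁ (x : Idx m n → ℂ) (g : Idx m n → MvPolynomial (Idx m n) ℂ)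
    (φ : MvPolynomial (Idx m n) ℂ) :
    eval x (bind₁ g φ) = eval (fun i => eval x (g i)) φ := by
  rw [← aeval_eq_eval, aeval_bind₁]
  simp [aeval_eq_eval]

theorem eval_Gp (W : Idx m n → ℂ) :
    eval W (Gp T Cm) = (toMat W * Cm * (toMat W)ᵀ * T).trace := by
  have rhs : (toMat W * Cm * (toMat W)ᵀ * T).trace = ∑ a : Fin m, ∑ x : Fin m, ∑ y : Fin n,
      ∑ z : Fin n, W (a, z) * Cm z y * W (x, y) * T x a := by
    simp only [Matrix.trace, Matrix.diag, Matrix.mul_apply, Matrix.transpose_apply, toMat,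
      Matrix.of_apply, Finset.sum_mul, Finset.mul_sum]
  have lhs : eval W (Gp T Cm) =
      ∑ u : Idx m n, ∑ v : Idx m n, coef T Cm u v * (W u * W v) := by
    simp [Gp, smul_eq_C_mul]
  have lhs2 : eval W (Gp T Cm) = ∑ a : Fin m, ∑ z : Fin n, ∑ x : Fin m, ∑ y : Fin n,
      coef T Cm (a, z) (x, y) * (W (a, z) * W (x, y)) := by
    rw [lhs, Fintype.sum_prod_type]
    refine Finset.sum_congr rfl fun a _ => Finset.sum_congr rfl fun z _ => ?_
    rw [Fintype.sum_prod_type]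
  rw [lhs2, rhs]
  refine Finset.sum_congr rfl fun a _ => ?_
  rw [Finset.sum_comm]
  refine Finset.sum_congr rfl fun x _ => ?_
  rw [Finset.sum_comm]
  refine Finset.sum_congr rfl fun y _ => Finset.sum_congr rfl fun z _ => ?_
  simp only [coef]
  ring

theorem pderiv_Gp (i : Idx m n) :
    Lp T Cm i = (∑ v : Idx m n, coef T Cm i v • X v)
      + ∑ u : Idx m n, coef T Cm u i • X u := by
  have key : ∀ u v : Idx m n, pderiv i (X u * X v : MvPolynomial (Idx m n) ℂ) =
      (if u = i then X v else 0) + (if v = i then X u else 0) := by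
    intro u v
    rw [pderiv_mul]
    rcases eq_or_ne u i with h1 | h1 <;> rcases eq_or_ne v i with h2 | h2
    · subst h1; subst h2; simp [pderiv_X_self]
    · subst h1; simp [pderiv_X_self, pderiv_X_of_ne h2, h2]
    · subst h2; simp [pderiv_X_self, pderiv_X_of_ne h1, h1]
    · simp [pderiv_X_of_ne h1, pderiv_X_of_ne h2, h1, h2]
  rw [Lp, Gp, map_sum]
  have step : ∀ u : Idx m n,
      pderiv i (∑ v : Idx m n, coef T Cm u v • (X u * X v) : MvPolynomial (Idx m n) ℂ) =
      (if u = i then (∑ v : Idx m n, coef T Cm u v • X v : MvPolynomial (Idx m n) ℂ) else 0)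
        + coef T Cm u i • X u := by
    intro u
    rw [map_sum]
    have : ∀ v : Idx m n, pderiv i (coef T Cm u v • (X u * X v) : MvPolynomial (Idx m n) ℂ) =
        (if u = i then (coef T Cm u v • X v : MvPolynomial (Idx m n) ℂ) else 0) +
          (if v = i then coef T Cm u v • X u else 0) := by
      intro v
      rw [Derivation.map_smul, key, smul_add]
      congr 1 <;> split <;> simp
    simp only [this, Finset.sum_add_distrib]
    congr 1
    · split <;> simp
    · rw [Finset.sum_eq_single i]
      · rw [if_pos rfl]
      · intro b _ hbi; rw [if_neg hbi]
      · intro h; exact absurd (Finset.mem_univ i) h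
  simp only [step, Finset.sum_add_distrib]
  congr 1
  rw [Finset.sum_eq_single i]
  · rw [if_pos rfl]
  · intro b _ hbi; rw [if_neg hbi]
  · intro h; exact absurd (Finset.mem_univ i) h

theorem pderiv_Lp (hT : T.IsSymm) (i j : Idx m n) :
    pderiv j (Lp T Cm i) = C (cc T Cm i j) := by
  rw [pderiv_Gp, map_add, map_sum, map_sum]
  have h1 : ∀ v : Idx m n, pderiv j (coef T Cm i v • X v) =
      if v = j then C (coef T Cm i j) else 0 := by
    intro v
    rw [Derivation.map_smul]
    rcases eq_or_ne v j with rfl | hv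
    · simp [pderiv_X_self, smul_eq_C_mul]
    · simp [pderiv_X_of_ne hv, hv]
  have h2 : ∀ u : Idx m n, pderiv j (coef T Cm u i • X u) =
      if u = j then C (coef T Cm j i) else 0 := by
    intro u
    rw [Derivation.map_smul]
    rcases eq_or_ne u j with rfl | hu
    · simp [pderiv_X_self, smul_eq_C_mul]
    · simp [pderiv_X_of_ne hu, hu]
  simp only [h1, h2, Finset.sum_ite_eq', Finset.mem_univ, if_true]
  rw [← map_add]
  congr 1
  simp only [coef, cc, ee]
  have hT1 : T j.1 i.1 = T i.1 j.1 := hT.apply i.1 j.1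
  rw [hT1]
  ring

theorem pderiv_bind₁ (hT : T.IsSymm) (i : Idx m n) (Q : MvPolynomial (Idx m n) ℂ) :
    pderiv i (bind₁ (Lp T Cm) Q) =
      ∑ j : Idx m n, cc T Cm i j • bind₁ (Lp T Cm) (pderiv j Q) := by
  induction Q using MvPolynomial.induction_on with
  | C a => simp [bind₁_C_right, pderiv_C]
  | add p q hp hq => simp only [map_add, hp, hq, ← Finset.sum_add_distrib, smul_add]
  | mul_X Q k ih =>
    rw [_root_.map_mul, bind₁_X_right, pderiv_mul, ih, pderiv_Lp T Cm hT]
    have hgoal : ∀ j : Idx m n, bind₁ (Lp T Cm) (pderiv j (Q * X k)) =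
        bind₁ (Lp T Cm) (pderiv j Q) * Lp T Cm k +
          (if k = j then bind₁ (Lp T Cm) Q else 0) := by
      intro j
      rw [pderiv_mul, map_add, _root_.map_mul, bind₁_X_right]
      congr 1
      rcases eq_or_ne k j with rfl | hk
      · rw [pderiv_X_self, if_pos rfl, mul_one]
      · rw [pderiv_X_of_ne hk, if_neg hk, mul_zero, map_zero]
    simp only [hgoal, smul_add, Finset.sum_add_distrib]
    congr 1
    · rw [Finset.sum_mul]
      refine Finset.sum_congr rfl fun j _ => ?_
      rw [smul_mul_assoc]
    · have : ∀ j : Idx m n, cc T Cm i j • (if k = j then bind₁ (Lp T Cm) Q else 0) =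
          if j = k then cc T Cm i k • bind₁ (Lp T Cm) Q else 0 := by
        intro j
        rcases eq_or_ne j k with rfl | hj
        · rw [if_pos rfl, if_pos rfl]
        · rw [if_neg (Ne.symm hj), if_neg hj, smul_zero]
      simp only [this, Finset.sum_ite_eq', Finset.mem_univ, if_true]
      rw [smul_eq_C_mul, cc_symm, mul_comm]

theorem eval_Lp (hT : T.IsSymm) (hC : Cm.IsSymm) (W : Idx m n → ℂ) (i : Idx m n) :
    eval W (Lp T Cm i) = ((2 : ℂ) • (T * toMat W * Cm)) i.1 i.2 := by
  rw [pderiv_Gp]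
  have target : ((2 : ℂ) • (T * toMat W * Cm)) i.1 i.2 =
      2 * ∑ q : Fin n, ∑ p : Fin m, T i.1 p * W (p, q) * Cm q i.2 := by
    simp only [Matrix.smul_apply, Matrix.mul_apply, toMat, Matrix.of_apply, smul_eq_mul,
      Finset.sum_mul, Finset.mul_sum]
  rw [target]
  simp only [map_add, map_sum, smul_eq_C_mul, eval_mul, eval_C, eval_X]
  rw [Fintype.sum_prod_type, Fintype.sum_prod_type]
  rw [two_mul, Finset.sum_comm]
  congr 1
  · refine Finset.sum_congr rfl fun p _ => Finset.sum_congr rfl fun q _ => ?_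
    simp only [coef]
    rw [hC.apply, hT.apply]
    ring
  · rw [Finset.sum_comm]
    refine Finset.sum_congr rfl fun p _ => Finset.sum_congr rfl fun q _ => ?_
    simp only [coef]
    ring
theorem hasFDerivAt_eval (Q : MvPolynomial (Idx m n) ℂ) (W : Idx m n → ℂ) :
    HasFDerivAt (fun W' : Idx m n → ℂ => eval W' Q)
      (∑ j : Idx m n, eval W (pderiv j Q) •
        (ContinuousLinearMap.proj j : ((Idx m n → ℂ) →L[ℂ] ℂ))) W := by
  induction Q using MvPolynomial.induction_on generalizing W with
  | C a =>
    have : (∑ j : Idx m n, eval W (pderiv j (C a)) •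
        (ContinuousLinearMap.proj j : ((Idx m n → ℂ) →L[ℂ] ℂ))) = 0 := by
      refine Finset.sum_eq_zero fun j _ => ?_
      rw [pderiv_C, map_zero]
      exact ContinuousLinearMap.ext fun v => by simp
    rw [this]
    simp only [eval_C]
    exact hasFDerivAt_const a W
  | add p q hp hq =>
    have h := (hp W).add (hq W)
    simp only [eval_add] at h ⊢
    refine h.congr_fderiv (Eq.symm ?_)
    rw [← Finset.sum_add_distrib]
    refine Finset.sum_congr rfl fun j _ => ?_
    rw [map_add, map_add]
    exact ContinuousLinearMap.ext fun v => by simp [add_mul]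
  | mul_X p i hp =>
    have h := (hp W).mul (hasFDerivAt_apply (𝕜 := ℂ) i W)
    have hfun : (fun W' : Idx m n → ℂ => eval W' (p * X i)) =
        fun W' : Idx m n → ℂ => eval W' p * W' i := by
      funext W'; simp
    rw [hfun]
    refine h.congr_fderiv (Eq.symm ?_)
    apply ContinuousLinearMap.ext
    intro v
    simp only [ContinuousLinearMap.sum_apply, ContinuousLinearMap.smul_apply,
      ContinuousLinearMap.proj_apply, ContinuousLinearMap.add_apply, smul_eq_mul]
    have expand : ∀ j : Idx m n, eval W (pderiv j (p * X i)) * v j =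
        eval W (pderiv j p) * eval W (X i) * v j
          + (if j = i then eval W p * v j else 0) := by
      intro j
      rw [pderiv_mul, eval_add, eval_mul, add_mul]
      congr 1
      rcases eq_or_ne j i with rfl | hj
      · rw [pderiv_X_self, mul_one, if_pos rfl]
      · rw [pderiv_X_of_ne (Ne.symm hj), mul_zero, map_zero, zero_mul, if_neg hj]
    rw [Finset.sum_congr rfl fun j _ => expand j, Finset.sum_add_distrib]
    rw [Finset.sum_ite_eq' Finset.univ i fun j => eval W p * v j]
    simp only [Finset.mem_univ, if_true, eval_X]
    rw [add_comm]
    congr 1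
    rw [Finset.mul_sum]
    exact Finset.sum_congr rfl fun j _ => by ring
theorem dirDeriv_eval_exp (Q : MvPolynomial (Idx m n) ℂ) (i : Idx m n) (W : Idx m n → ℂ) :
    dirDeriv i (fun W' => eval W' Q * Complex.exp (eval W' (Gp T Cm))) W =
      eval W (Lp T Cm i * Q + pderiv i Q) * Complex.exp (eval W (Gp T Cm)) := by
  have h1 := hasFDerivAt_eval Q W
  have h2 := (hasFDerivAt_eval (Gp T Cm) W).cexp
  have h := h1.mul h2
  have hfd : dirDeriv i (fun W' => eval W' Q * Complex.exp (eval W' (Gp T Cm))) W =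
      (fderiv ℂ (fun W' => eval W' Q * Complex.exp (eval W' (Gp T Cm))) W) (Pi.single i 1) := rfl
  rw [hfd, (show HasFDerivAt (fun W' => eval W' Q * Complex.exp (eval W' (Gp T Cm))) _ W from h).fderiv]
  simp only [ContinuousLinearMap.add_apply, ContinuousLinearMap.smul_apply,
    ContinuousLinearMap.sum_apply, ContinuousLinearMap.proj_apply, smul_eq_mul,
    Pi.single_apply, mul_ite, mul_one, mul_zero, Finset.sum_ite_eq', Finset.mem_univ, if_true,
    eval_add, eval_mul]
  rw [show pderiv i (Gp T Cm) = Lp T Cm i from rfl]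
  ring

theorem bridge (l : List (Idx m n)) (Q : MvPolynomial (Idx m n) ℂ) :
    ((l.map dirDeriv).prod : Function.End ((Idx m n → ℂ) → ℂ))
        (fun W' => eval W' Q * Complex.exp (eval W' (Gp T Cm))) =
      fun W => eval W (Aapp T Cm l Q) * Complex.exp (eval W (Gp T Cm)) := by
  induction l with
  | nil => rfl
  | cons i l ih =>
    rw [List.map_cons, List.prod_cons]
    show dirDeriv i (((l.map dirDeriv).prod : Function.End ((Idx m n → ℂ) → ℂ))
      (fun W' => eval W' Q * Complex.exp (eval W' (Gp T Cm)))) = _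
    rw [ih]
    funext W
    exact dirDeriv_eval_exp T Cm (Aapp T Cm l Q) i W

theorem prod_pow_eq_flat {M : Type*} [Monoid M] (g : Idx m n → M) (α : Idx m n →₀ ℕ)
    (l : List (Idx m n)) :
    (l.map fun i => g i ^ α i).prod =
      ((l.flatMap fun i => List.replicate (α i) i).map g).prod := by
  induction l with
  | nil => rfl
  | cons i l ih =>
    rw [List.map_cons, List.prod_cons, ih, List.flatMap_cons, List.map_append,
      List.prod_append, List.map_replicate, List.prod_replicate]

theorem multiDeriv_eq (α : Idx m n →₀ ℕ) :
    multiDeriv α = ((idxList α).map dirDeriv).prod :=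
  prod_pow_eq_flat dirDeriv α _

theorem idxList_length (α : Idx m n →₀ ℕ) :
    (idxList α).length = ∑ i : Idx m n, α i := by
  rw [idxList, List.length_flatMap]
  rw [← Finset.sum_map_toList]
  congr 1
  simp [Function.comp]

theorem prodX_idxList (α : Idx m n →₀ ℕ) :
    ((idxList α).map X).prod = (monomial α (1 : ℂ) : MvPolynomial (Idx m n) ℂ) := by
  rw [idxList, ← prod_pow_eq_flat, Finset.prod_map_toList, monomial_eq, C_1, one_mul]
  exact (Finsupp.prod_fintype _ _ fun i => pow_zero _).symm

theorem isHomog_prodX (l : List (Idx m n)) :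
    ((l.map X).prod : MvPolynomial (Idx m n) ℂ).IsHomogeneous l.length := by
  induction l with
  | nil => exact isHomogeneous_one _ _
  | cons i l ih =>
    rw [List.map_cons, List.prod_cons, List.length_cons]
    simpa [add_comm] using (isHomogeneous_X ℂ i).mul ih
theorem fact_inv_succ (k : ℕ) :
    (((k + 1).factorial : ℂ))⁻¹ * ((k + 1 : ℕ) : ℂ) = ((k.factorial : ℂ))⁻¹ := by
  have h1 : ((k : ℂ) + 1) ≠ 0 := Nat.cast_add_one_ne_zero k
  have h2 : ((k.factorial : ℕ) : ℂ) ≠ 0 := Nat.cast_ne_zero.mpr k.factorial_ne_zero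
  rw [Nat.factorial_succ]
  push_cast
  field_simp

theorem wick (hT : T.IsSymm) (l : List (Idx m n)) (N : ℕ) (hN : l.length < N) :
    Aapp T Cm l 1 = ∑ k ∈ Finset.range N,
      ((k.factorial : ℂ))⁻¹ • bind₁ (Lp T Cm) ((lap T Cm ^ k) ((l.map X).prod)) := by
  induction l generalizing N with
  | nil =>
    rw [show ((List.map X List.nil).prod : MvPolynomial (Idx m n) ℂ) = 1 from rfl]
    rw [Finset.sum_eq_single 0]
    · simp [Aapp]
    · intro k _ hk
      obtain ⟨k', rfl⟩ : ∃ k', k = k' + 1 := ⟨k - 1, by omega⟩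
      rw [lap_pow_eq_zero T Cm (isHomogeneous_one _ _) (by omega), map_zero, smul_zero]
    · intro h; exact absurd (Finset.mem_range.mpr (by omega)) h
  | cons i l ih =>
    obtain ⟨M, rfl⟩ : ∃ M, N = M + 1 := ⟨N - 1, by omega⟩
    have hlM : l.length < M := by simpa using hN
    have hP : ((l.map X).prod : MvPolynomial (Idx m n) ℂ).IsHomogeneous l.length :=
      isHomog_prodX l
    set P : MvPolynomial (Idx m n) ℂ := (l.map X).prod with hPdef
    set B := bind₁ (Lp T Cm) with hB
    have hXP : (((i :: l).map X).prod : MvPolynomial (Idx m n) ℂ) = X i * P := by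
      rw [List.map_cons, List.prod_cons]
    show Lp T Cm i * Aapp T Cm l 1 + pderiv i (Aapp T Cm l 1) = _
    rw [hXP, ih (M + 1) (by omega)]
    set Θ := ∑ k ∈ Finset.range (M + 1),
      ((k.factorial : ℂ))⁻¹ • B ((lap T Cm ^ k) P) with hΘ
    have hterm : ∀ k : ℕ, (((k + 1).factorial : ℂ))⁻¹ • B ((lap T Cm ^ (k + 1)) (X i * P)) =
        (((k + 1).factorial : ℂ))⁻¹ • (Lp T Cm i * B ((lap T Cm ^ (k + 1)) P)) +
          ((k.factorial : ℂ))⁻¹ •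
            ∑ j : Idx m n, cc T Cm i j • B (pderiv j ((lap T Cm ^ k) P)) := by
      intro k
      rw [lap_pow_mul_X, map_add, _root_.map_mul, bind₁_X_right, _root_.map_smul, map_sum]
      rw [smul_add, smul_smul, fact_inv_succ]
      congr 2
      refine Finset.sum_congr rfl fun j _ => ?_
      rw [_root_.map_smul]
    have hrhs : (∑ k ∈ Finset.range (M + 1),
        ((k.factorial : ℂ))⁻¹ • B ((lap T Cm ^ k) (X i * P))) =
        Lp T Cm i * Θ + ∑ k ∈ Finset.range M, ((k.factorial : ℂ))⁻¹ •
          ∑ j : Idx m n, cc T Cm i j • B (pderiv j ((lap T Cm ^ k) P)) := by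
      rw [Finset.sum_range_succ']
      simp only [hterm]
      rw [Finset.sum_add_distrib]
      have h0 : ((Nat.factorial 0 : ℂ))⁻¹ • B ((lap T Cm ^ 0) (X i * P)) =
          Lp T Cm i * B P := by
        rw [pow_zero, Module.End.one_apply, _root_.map_mul, bind₁_X_right,
          Nat.factorial_zero, Nat.cast_one, inv_one, one_smul]
      have h0' : ((Nat.factorial 0 : ℂ))⁻¹ • B ((lap T Cm ^ 0) P) = B P := by
        rw [pow_zero, Module.End.one_apply, Nat.factorial_zero, Nat.cast_one, inv_one, one_smul]
      rw [h0, hΘ, Finset.sum_range_succ', h0', mul_add, Finset.mul_sum]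
      simp only [mul_smul_comm]
      ring
    have hdΘ : pderiv i Θ = ∑ k ∈ Finset.range M, ((k.factorial : ℂ))⁻¹ •
        ∑ j : Idx m n, cc T Cm i j • B (pderiv j ((lap T Cm ^ k) P)) := by
      rw [hΘ, map_sum]
      have hstep : ∀ k : ℕ, pderiv i (((k.factorial : ℂ))⁻¹ • B ((lap T Cm ^ k) P)) =
          ((k.factorial : ℂ))⁻¹ •
            ∑ j : Idx m n, cc T Cm i j • B (pderiv j ((lap T Cm ^ k) P)) := by
        intro k
        rw [Derivation.map_smul, pderiv_bind₁ T Cm hT]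
      simp only [hstep]
      rw [Finset.sum_range_succ]
      have hMP : (lap T Cm ^ M) P = 0 := lap_pow_eq_zero T Cm hP (by omega)
      rw [hMP]
      simp
    rw [hrhs, hdΘ]
theorem lap_eq_sum_laplacian (S : Matrix (Fin m) (Fin m) ℝ)
    (hTdef : T = (S⁻¹).map Complex.ofReal) (P : MvPolynomial (Idx m n) ℂ) :
    lap T Cm P = ∑ i : Fin n, ∑ j : Fin n, Cm i j • laplacian S i j P := by
  rw [lap_apply]
  have rhs : ∀ i j : Fin n, Cm i j • laplacian S i j P =
      ∑ p : Fin m, ∑ q : Fin m,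
        (T p q * Cm i j) • pderiv (p, i) (pderiv (q, j) P) := by
    intro i j
    rw [laplacian, Finset.smul_sum]
    refine Finset.sum_congr rfl fun p _ => ?_
    rw [Finset.smul_sum]
    refine Finset.sum_congr rfl fun q _ => ?_
    rw [smul_smul, hTdef]
    congr 1
    rw [Matrix.map_apply, mul_comm]
  simp only [rhs]
  rw [Fintype.sum_prod_type]
  have inner : ∀ p : Fin m, ∀ i : Fin n,
      (∑ b : Idx m n, ee T Cm (p, i) b • pderiv (p, i) (pderiv b P)) =
      ∑ q : Fin m, ∑ j : Fin n, (T p q * Cm i j) • pderiv (p, i) (pderiv (q, j) P) := by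
    intro p i
    rw [Fintype.sum_prod_type]
    exact Finset.sum_congr rfl fun q _ => Finset.sum_congr rfl fun j _ => rfl
  simp only [inner]
  rw [Finset.sum_comm]
  refine Finset.sum_congr rfl fun i _ => ?_
  trans (∑ p : Fin m, ∑ j : Fin n, ∑ q : Fin m,
    (T p q * Cm i j) • pderiv (p, i) (pderiv (q, j) P))
  · exact Finset.sum_congr rfl fun p _ => Finset.sum_comm
  · exact Finset.sum_comm
end Aux

open Aux in
/-- For `P` homogeneous pluriharmonic with respect to a positive definite symmetric
`S`, and `C ∈ ℂ^(n×n)` symmetric,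
`P(∂_W) e^{tr(W C Wᵀ S⁻¹)} = P(2 S⁻¹ W C) e^{tr(W C Wᵀ S⁻¹)}`. -/
theorem stmt_16 {m n : ℕ} (S : Matrix (Fin m) (Fin m) ℝ)
    (hS : S.PosDef) (hSsymm : S.IsSymm)
    (Cm : Matrix (Fin n) (Fin n) ℂ) (hC : Cm.IsSymm)
    (P : MvPolynomial (Idx m n) ℂ) (d : ℕ) (hhom : P.IsHomogeneous d)
    (hP : Pluriharmonic S P) :
    ∀ W : Idx m n → ℂ,
      diffOpFun P
        (fun W' => Complex.exp
          ((toMat W' * Cm * (toMat W')ᵀ * (S⁻¹).map Complex.ofReal).trace)) W =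
      eval (fun kl : Idx m n =>
          ((2 : ℂ) • ((S⁻¹).map Complex.ofReal * toMat W * Cm)) kl.1 kl.2) P *
        Complex.exp ((toMat W * Cm * (toMat W)ᵀ * (S⁻¹).map Complex.ofReal).trace) := by
  intro W
  set T : Matrix (Fin m) (Fin m) ℂ := (S⁻¹).map Complex.ofReal with hTdef
  have hT : T.IsSymm := by
    have h1 : (S⁻¹).IsSymm := by
      rw [Matrix.IsSymm, Matrix.transpose_nonsing_inv, hSsymm.eq]
    exact h1.map _
  -- the Gaussian as an `eval`-shaped function
  have hf : (fun W' => Complex.exp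
      ((toMat W' * Cm * (toMat W')ᵀ * (S⁻¹).map Complex.ofReal).trace)) =
      (fun W' => eval W' (1 : MvPolynomial (Idx m n) ℂ) *
        Complex.exp (eval W' (Gp T Cm))) := by
    funext W'
    rw [_root_.map_one, one_mul, eval_Gp]
  rw [hf]
  simp only [diffOpFun]
  set E := Complex.exp (eval W (Gp T Cm)) with hE
  -- lap annihilates P
  have hlapP : lap T Cm P = 0 := by
    rw [lap_eq_sum_laplacian T Cm S hTdef P]
    refine Finset.sum_eq_zero fun i _ => Finset.sum_eq_zero fun j _ => ?_
    rw [hP i j, smul_zero]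
  have hlapPk : ∀ k : ℕ, k ≠ 0 → (lap T Cm ^ k) P = 0 := by
    intro k hk
    obtain ⟨k', rfl⟩ : ∃ k', k = k' + 1 := ⟨k - 1, by omega⟩
    rw [pow_succ, Module.End.mul_apply, hlapP, map_zero]
  -- each multiDeriv term
  have hterm : ∀ α ∈ P.support,
      multiDeriv α (fun W' => eval W' (1 : MvPolynomial (Idx m n) ℂ) *
          Complex.exp (eval W' (Gp T Cm))) W =
      eval W (∑ k ∈ Finset.range (d + 1),
        ((k.factorial : ℂ))⁻¹ • bind₁ (Lp T Cm) ((lap T Cm ^ k) (monomial α 1))) * E := by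
    intro α hα
    have hlen : (idxList α).length < d + 1 := by
      rw [idxList_length]
      have hα' : (Finsupp.weight 1) α = d := hhom (mem_support_iff.mp hα)
      have : ∑ i : Idx m n, α i = α.degree := by
        rw [Finsupp.degree_apply]
        exact (Finset.sum_subset (Finset.subset_univ _)
          (fun i _ hz => Finsupp.notMem_support_iff.mp hz)).symm
      rw [this]
      rw [Finsupp.degree_eq_weight_one, show (Finsupp.weight fun _ => (1:ℕ)) α = d from hα']
      omega
    rw [multiDeriv_eq]
    have hb := congrFun (bridge T Cm (idxList α) 1) W
    rw [hb, wick T Cm hT (idxList α) (d + 1) hlen, prodX_idxList]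
  have hterm' : (∑ α ∈ P.support, P.coeff α *
      multiDeriv α (fun W' => eval W' (1 : MvPolynomial (Idx m n) ℂ) *
        Complex.exp (eval W' (Gp T Cm))) W) =
      ∑ α ∈ P.support, P.coeff α *
        (eval W (∑ k ∈ Finset.range (d + 1),
          ((k.factorial : ℂ))⁻¹ • bind₁ (Lp T Cm) ((lap T Cm ^ k) (monomial α 1))) * E) :=
    Finset.sum_congr rfl fun α hα => by rw [hterm α hα]
  rw [hterm']
  -- pull the exponential out and use linearity
  have hsum : ∑ α ∈ P.support, P.coeff α *
      (eval W (∑ k ∈ Finset.range (d + 1),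
        ((k.factorial : ℂ))⁻¹ • bind₁ (Lp T Cm) ((lap T Cm ^ k) (monomial α 1))) * E) =
      (∑ α ∈ P.support, P.coeff α *
        eval W (∑ k ∈ Finset.range (d + 1),
          ((k.factorial : ℂ))⁻¹ • bind₁ (Lp T Cm) ((lap T Cm ^ k) (monomial α 1)))) * E := by
    rw [Finset.sum_mul]
    exact Finset.sum_congr rfl fun α _ => (mul_assoc _ _ _).symm
  rw [hsum]
  congr 1
  · -- main polynomial identity
    have hlin : ∀ α ∈ P.support, P.coeff α *
        eval W (∑ k ∈ Finset.range (d + 1),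
          ((k.factorial : ℂ))⁻¹ • bind₁ (Lp T Cm) ((lap T Cm ^ k) (monomial α 1))) =
        eval W (∑ k ∈ Finset.range (d + 1),
          ((k.factorial : ℂ))⁻¹ • bind₁ (Lp T Cm) ((lap T Cm ^ k)
            (monomial α (P.coeff α)))) := by
      intro α _
      rw [← smul_eval]
      congr 1
      rw [Finset.smul_sum]
      refine Finset.sum_congr rfl fun k _ => ?_
      rw [show (monomial α (P.coeff α) : MvPolynomial (Idx m n) ℂ) =
          P.coeff α • monomial α (1 : ℂ) by rw [smul_monomial, smul_eq_mul, mul_one]]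
      rw [_root_.map_smul, _root_.map_smul, smul_comm]
    rw [Finset.sum_congr rfl hlin, ← map_sum (eval W), ← Finset.sum_comm]
    -- now inner: ∑_k (k!)⁻¹ • B (lap^k ∑_α monomial α (coeff α)) = B P
    have hmono : ∀ k : ℕ, (∑ α ∈ P.support,
        ((k.factorial : ℂ))⁻¹ • bind₁ (Lp T Cm) ((lap T Cm ^ k) (monomial α (P.coeff α)))) =
        ((k.factorial : ℂ))⁻¹ • bind₁ (Lp T Cm) ((lap T Cm ^ k) P) := by
      intro k
      rw [← Finset.smul_sum, ← map_sum (bind₁ (Lp T Cm)), ← map_sum (lap T Cm ^ k),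
        P.support_sum_monomial_coeff]
    rw [Finset.sum_congr rfl fun k _ => hmono k]
    have hcollapse : (∑ k ∈ Finset.range (d + 1),
        ((k.factorial : ℂ))⁻¹ • bind₁ (Lp T Cm) ((lap T Cm ^ k) P)) =
        bind₁ (Lp T Cm) P := by
      rw [Finset.sum_eq_single 0]
      · simp
      · intro k _ hk
        rw [hlapPk k hk, map_zero, smul_zero]
      · intro h; exact absurd (Finset.mem_range.mpr (by omega)) h
    rw [hcollapse, eval_bind₁]
    have harg : (fun kl : Idx m n => ((2 : ℂ) • (T * toMat W * Cm)) kl.1 kl.2) =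
        fun i : Idx m n => eval W (Lp T Cm i) := by
      funext kl
      rw [eval_Lp T Cm hT hC W kl]
    rw [harg]
  · rw [hE, eval_Gp]
end
end
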